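/- Let G be a strongly connected digraph, s a vertex, and G(s) the flow graph with start s. If (u,v) is a strong bridge of G that is not a bridge of G(s), then (v,u) appears as a bridge in the reverse flow graph obtained from the first-level auxiliary graph containing u and v; in particular, every strong bridge of G is either a bridge of G(s) or the reverse of a bridge of G^R(s). -/

import Mathlib

variable {V : Type*}

/-- A walk in a digraph given by its edge set `E`, recorded as a list of edges. -/
inductive IsWalk (E : Set (V × V)) : V → V → List (V × V) → Prop
  | nil (u : V) : IsWalk E u u []
  | cons {u v w : V} {p : List (V × V)} (h : (u, v) ∈ E) (hp : IsWalk E v w p) :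
      IsWalk E u w ((u, v) :: p)

def Reaches (E : Set (V × V)) (u v : V) : Prop := ∃ p, IsWalk E u v p

def StronglyConnected (E : Set (V × V)) : Prop := ∀ u v : V, Reaches E u v

/-- Two edge-disjoint directed paths from `u` to `v`. -/
def TwoEDP (E : Set (V × V)) (u v : V) : Prop :=
  ∃ p q, IsWalk E u v p ∧ IsWalk E u v q ∧ p.Disjoint q

/-- `u` and `v` are 2-edge-connected. -/
def TwoEC (E : Set (V × V)) (u v : V) : Prop := TwoEDP E u v ∧ TwoEDP E v u

/-- A 2-edge-connected block: a maximal set of pairwise 2-edge-connected vertices. -/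
def Is2ECBlock (E : Set (V × V)) (B : Set V) : Prop :=
  (∀ u ∈ B, ∀ v ∈ B, TwoEC E u v) ∧
    ∀ C : Set V, B ⊆ C → (∀ u ∈ C, ∀ v ∈ C, TwoEC E u v) → C = B

def SameBlocks (E E' : Set (V × V)) : Prop :=
  ∀ B : Set V, Is2ECBlock E B ↔ Is2ECBlock E' B

/-- A strong bridge: an edge whose removal increases the number of strongly
connected components, i.e. destroys the mutual reachability of some pair. -/
def IsStrongBridge (E : Set (V × V)) (e : V × V) : Prop :=
  e ∈ E ∧ ∃ u v : V, (Reaches E u v ∧ Reaches E v u) ∧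
    ¬ (Reaches (E \ {e}) u v ∧ Reaches (E \ {e}) v u)

/-- A 2-edge-connected digraph: strongly connected and stays so after deleting any edge. -/
def Is2ECGraph (E : Set (V × V)) : Prop :=
  StronglyConnected E ∧ ∀ e ∈ E, StronglyConnected (E \ {e})

/-- Edges of `E` induced on the vertex set `C`. -/
def restrictE (E : Set (V × V)) (C : Set V) : Set (V × V) :=
  {e ∈ E | e.1 ∈ C ∧ e.2 ∈ C}

def SCOn (E' : Set (V × V)) (C : Set V) : Prop :=
  ∀ u ∈ C, ∀ v ∈ C, Reaches E' u v

/-- `E'` is a 2-edge-connected (spanning sub)graph on the vertex set `C`. -/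
def Is2ECOn (E' : Set (V × V)) (C : Set V) : Prop :=
  SCOn E' C ∧ ∀ e ∈ E', SCOn (E' \ {e}) C

/-- A 2-edge-connected component: a maximal vertex set inducing a 2-edge-connected subgraph. -/
def Is2ECComponent (E : Set (V × V)) (C : Set V) : Prop :=
  Is2ECOn (restrictE E C) C ∧
    ∀ D : Set V, C ⊆ D → Is2ECOn (restrictE E D) D → D = C

/-- A solution to 2EC-B: a strongly connected spanning subgraph with the same
2-edge-connected blocks. -/
def IsSolutionB (E E' : Set (V × V)) : Prop :=
  E' ⊆ E ∧ StronglyConnected E' ∧ SameBlocks E' E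

/-- The reverse digraph. -/
def revE (E : Set (V × V)) : Set (V × V) := {e | (e.2, e.1) ∈ E}

/-- A bridge of the flow graph with start vertex `s`: an edge contained in every
walk from `s` to its head. -/
def IsBridge (E : Set (V × V)) (s : V) (e : V × V) : Prop :=
  e ∈ E ∧ ∀ p, IsWalk E s e.2 p → e ∈ p

/-- `u` is a vertex of the walk `p` starting at `s`. -/
def OnWalk (s : V) (p : List (V × V)) (u : V) : Prop :=
  u = s ∨ ∃ e ∈ p, e.2 = u

/-- `u` dominates `w` in the flow graph with start `s`. -/
def Dom (E : Set (V × V)) (s u w : V) : Prop :=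
  ∀ p, IsWalk E s w p → OnWalk s p u

def PDom (E : Set (V × V)) (s u w : V) : Prop := Dom E s u w ∧ u ≠ w

/-- `u` is the immediate dominator of `w`. -/
def Idom (E : Set (V × V)) (s u w : V) : Prop :=
  PDom E s u w ∧ ∀ x, PDom E s x w → Dom E s x u

/-- Marked vertices: roots of the trees of the canonical decomposition of the
dominator tree, i.e. `s` and the heads of bridges of `G(s)`. -/
def Marked (E : Set (V × V)) (s r : V) : Prop :=
  r = s ∨ ∃ e, IsBridge E s e ∧ e.2 = r

/-- `w` belongs to the tree `T(r)` of the canonical decomposition: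
`r` is the nearest marked dominator of `w`. -/
def InTree (E : Set (V × V)) (s r w : V) : Prop :=
  Marked E s r ∧ Dom E s r w ∧ ∀ x, Marked E s x → Dom E s x w → Dom E s x r

/-- A spanning tree of the flow graph `G(s)` rooted at `s`. -/
def IsSpanningTree (E : Set (V × V)) (s : V) (T : Set (V × V)) : Prop :=
  T ⊆ E ∧ (∀ v, Reaches T s v) ∧ (∀ v, v ≠ s → ∃! e, e ∈ T ∧ e.2 = v) ∧
    ∀ e ∈ T, e.2 ≠ s

/-- Two independent spanning trees: for every `v`, the two tree paths from `s`
to `v` share only dominators of `v`. -/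
def IndependentTrees (E : Set (V × V)) (s : V) (T₁ T₂ : Set (V × V)) : Prop :=
  IsSpanningTree E s T₁ ∧ IsSpanningTree E s T₂ ∧
    ∀ v p q, IsWalk T₁ s v p → IsWalk T₂ s v q →
      ∀ u, OnWalk s p u → OnWalk s q u → Dom E s u v

/-- The contraction map defining the first-level auxiliary graph `G_r`:
vertices of `T(r)` stay put, descendants of a marked child `x` of a boundary
vertex of `T(r)` are contracted into `x`, and non-descendants of `r` are
contracted into `d(r)`. -/
def ContractsTo (E : Set (V × V)) (s r v x : V) : Prop :=
  (InTree E s r v ∧ x = v) ∨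
  (Dom E s r v ∧ ¬ InTree E s r v ∧ Marked E s x ∧ Dom E s x v ∧
    ∃ u, InTree E s r u ∧ Idom E s u x) ∨
  (¬ Dom E s r v ∧ Idom E s x r)

/-- The edge set of the first-level auxiliary graph `G_r`. -/
def AuxE (E : Set (V × V)) (s r : V) : Set (V × V) :=
  {e | ∃ a b, (a, b) ∈ E ∧ ContractsTo E s r a e.1 ∧ ContractsTo E s r b e.2}

def cutEdges (E : Set (V × V)) (U W : Set V) : Set (V × V) :=
  {e ∈ E | e.1 ∈ U ∧ e.2 ∈ W}

def IsCut (u w : V) (U W : Set V) : Prop := u ∈ U ∧ w ∈ W ∧ Disjoint U W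

def IsMinCut (E : Set (V × V)) (u w : V) (U W : Set V) : Prop :=
  IsCut u w U W ∧ ∀ U' W' : Set V, IsCut u w U' W' →
    (cutEdges E U W).ncard ≤ (cutEdges E U' W').ncard

/-- There exist `k` pairwise edge-disjoint walks from `u` to `w`. -/
def HasEDP (E : Set (V × V)) (u w : V) (k : ℕ) : Prop :=
  ∃ P : Fin k → List (V × V), (∀ i, IsWalk E u w (P i)) ∧
    ∀ i j, i ≠ j → (P i).Disjoint (P j)

/-- The (loop-free, simple) quotient of the inter-component edges `F` under the
component map `h`. -/
def quotE {V' : Type*} (h : V → V') (F : Set (V × V)) : Set (V' × V') :=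
  {q | ∃ e ∈ F, h e.1 = q.1 ∧ h e.2 = q.2 ∧ q.1 ≠ q.2}

/-- A solution to 2EC-C: a strongly connected spanning subgraph with the same
2-edge-connected components. -/
def IsSolutionC (E E' : Set (V × V)) : Prop :=
  E' ⊆ E ∧ StronglyConnected E' ∧
    ∀ C : Set V, Is2ECComponent E C ↔ Is2ECComponent E' C

/-- One step of the deletion process: delete an edge `(x,y)` such that two
edge-disjoint `x → y` paths remain. -/
def DelStep (E₁ E₂ : Set (V × V)) : Prop :=
  ∃ x y : V, (x, y) ∈ E₁ ∧ E₂ = E₁ \ {(x, y)} ∧ TwoEDP E₂ x y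


/-!
Let `e = (u, v)` be a strong bridge and write `G - e` for `E \ {e}`. Every walk of `G` can be
rerouted around `e` once `u` reaches `v` in `G - e`, so `u` does not reach `v` in `G - e`. If `e`
is not a bridge of `G(s)`, then `s` reaches `v`, hence every vertex, in `G - e`; a walk from `u`
to `s` in `G - e` would then close a `u`-`v` walk, so `(v, u)` is a bridge of `G^R(s)`.

For the auxiliary graph `G_r` of the tree `T(r)` containing `u` and `v`, a walk from `u` to `r`
in `G_r - (u, v)` lifts to `G - e`: the vertices reachable from `u` in `G - e` are closed under
the contractions defining `G_r`. Indeed, a vertex `c` that cannot return to `s` in `G - e` reaches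
`u`, so it is dominated by `r`; and a marked vertex `x` dominating `c` is reachable from `u`, since
otherwise `x` would dominate `u` and hence equal `r`. As `r` reaches `v` in `G - e`, the lifted
walk contradicts the first observation.
-/

theorem OnWalk.mono {s x : V} {p q : List (V × V)} (h : OnWalk s p x) (hpq : p ⊆ q) :
    OnWalk s q x :=
  h.imp_right fun ⟨e, he, hex⟩ => ⟨e, hpq he, hex⟩

theorem OnWalk.of_append {a b x : V} {p q : List (V × V)} (h : OnWalk a (p ++ q) x) :
    OnWalk a p x ∨ OnWalk b q x := by
  rcases h with rfl | ⟨e, he, hex⟩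
  · exact .inl (.inl rfl)
  · rcases List.mem_append.1 he with he | he
    · exact .inl (.inr ⟨e, he, hex⟩)
    · exact .inr (.inr ⟨e, he, hex⟩)

namespace IsWalk

variable {E F : Set (V × V)} {a b x : V} {p : List (V × V)}

theorem append {c : V} {q : List (V × V)} (hp : IsWalk E a b p) (hq : IsWalk E b c q) :
    IsWalk E a c (p ++ q) := by
  induction hp with
  | nil => exact hq
  | cons h _ ih => exact .cons h (ih hq)

theorem mono (hEF : E ⊆ F) (hp : IsWalk E a b p) : IsWalk F a b p := by
  induction hp with
  | nil => exact .nil _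
  | cons h _ ih => exact .cons (hEF h) ih

theorem mem_of_mem {e : V × V} (hp : IsWalk E a b p) (he : e ∈ p) : e ∈ E := by
  induction hp with
  | nil => simp at he
  | cons h _ ih =>
    rcases List.mem_cons.1 he with rfl | he
    · exact h
    · exact ih he

theorem diff_singleton {e : V × V} (hp : IsWalk E a b p) (he : e ∉ p) :
    IsWalk (E \ {e}) a b p := by
  induction hp with
  | nil => exact .nil _
  | cons h _ ih =>
    simp only [List.mem_cons, not_or] at he
    exact .cons ⟨h, Ne.symm he.1⟩ (ih he.2)

theorem exists_append_of_onWalk (hp : IsWalk E a b p) (hx : OnWalk a p x) :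
    ∃ q r, p = q ++ r ∧ IsWalk E a x q ∧ IsWalk E x b r := by
  induction hp with
  | nil =>
    rcases hx with rfl | ⟨e, he, -⟩
    · exact ⟨[], [], rfl, .nil _, .nil _⟩
    · simp at he
  | @cons a y b p hay hp ih =>
    rcases hx with rfl | ⟨e, he, rfl⟩
    · exact ⟨[], _, rfl, .nil _, .cons hay hp⟩
    rcases List.mem_cons.1 he with rfl | he
    · exact ⟨[(a, y)], p, rfl, .cons hay (.nil _), hp⟩
    · obtain ⟨q, r, rfl, hq, hr⟩ := ih (.inr ⟨e, he, rfl⟩)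
      exact ⟨(a, y) :: q, r, rfl, .cons hay hq, hr⟩

theorem exists_shorter_of_onWalk (hp : IsWalk E a b p) (hx : OnWalk a p x) (hxb : x ≠ b) :
    ∃ q, IsWalk E a x q ∧ q.length < p.length := by
  obtain ⟨q, r, rfl, hq, hr⟩ := hp.exists_append_of_onWalk hx
  cases hr with
  | nil => exact absurd rfl hxb
  | cons => exact ⟨q, hq, by simp⟩

theorem reaches_of_onWalk (hp : IsWalk E a b p) (hx : OnWalk a p x) :
    Reaches E a x ∧ Reaches E x b := by
  obtain ⟨q, r, -, hq, hr⟩ := hp.exists_append_of_onWalk hx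
  exact ⟨⟨q, hq⟩, ⟨r, hr⟩⟩

theorem onWalk_end (hp : IsWalk E a b p) : OnWalk a p b := by
  induction hp with
  | nil => exact .inl rfl
  | cons _ _ ih =>
    rcases ih with rfl | ⟨e, he, rfl⟩
    · exact .inr ⟨_, List.mem_cons_self, rfl⟩
    · exact .inr ⟨e, List.mem_cons_of_mem _ he, rfl⟩

end IsWalk

namespace Reaches

variable {E F : Set (V × V)} {a b c : V}

theorem refl (E : Set (V × V)) (a : V) : Reaches E a a := ⟨[], .nil a⟩

theorem single (h : (a, b) ∈ E) : Reaches E a b := ⟨[(a, b)], .cons h (.nil b)⟩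

theorem trans (hab : Reaches E a b) (hbc : Reaches E b c) : Reaches E a c :=
  let ⟨p, hp⟩ := hab
  let ⟨q, hq⟩ := hbc
  ⟨p ++ q, hp.append hq⟩

theorem mono (hEF : E ⊆ F) (h : Reaches E a b) : Reaches F a b :=
  let ⟨p, hp⟩ := h
  ⟨p, hp.mono hEF⟩

theorem diff_singleton_or {e : V × V} (h : Reaches E a b) :
    Reaches (E \ {e}) a b ∨ Reaches (E \ {e}) a e.1 ∧ Reaches (E \ {e}) e.2 b := by
  obtain ⟨p, hp⟩ := h
  induction hp with
  | nil => exact .inl (refl _ _)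
  | @cons x y b p hxy _ ih =>
    by_cases hxye : (x, y) = e
    · subst hxye
      exact .inr ⟨refl _ _, ih.elim id And.right⟩
    · have hxy' : Reaches (E \ {e}) x y := single ⟨hxy, hxye⟩
      exact ih.imp hxy'.trans fun h => ⟨hxy'.trans h.1, h.2⟩

theorem of_revE (h : Reaches (revE E) a b) : Reaches E b a := by
  obtain ⟨p, hp⟩ := h
  induction hp with
  | nil => exact refl _ _
  | cons hxy _ ih => exact ih.trans (single hxy)

end Reaches

theorem reaches_revE_iff {E : Set (V × V)} {a b : V} : Reaches (revE E) a b ↔ Reaches E b a :=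
  ⟨Reaches.of_revE, fun h => Reaches.of_revE (E := revE E) h⟩

theorem revE_diff_singleton (E : Set (V × V)) (e : V × V) :
    revE E \ {e.swap} = revE (E \ {e}) := by
  ext ⟨a, b⟩
  simp [revE, Prod.swap, Prod.ext_iff, and_comm]

theorem isBridge_iff {E : Set (V × V)} {s : V} {e : V × V} :
    IsBridge E s e ↔ e ∈ E ∧ ¬ Reaches (E \ {e}) s e.2 := by
  refine and_congr_right fun _ => ⟨?_, ?_⟩
  · rintro h ⟨p, hp⟩
    exact (hp.mem_of_mem (h p (hp.mono Set.sdiff_subset))).2 rfl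
  · intro h p hp
    by_contra he
    exact h ⟨p, hp.diff_singleton he⟩

theorem isBridge_revE_iff {E : Set (V × V)} {s : V} {e : V × V} :
    IsBridge (revE E) s e.swap ↔ e ∈ E ∧ ¬ Reaches (E \ {e}) e.1 s := by
  rw [isBridge_iff, revE_diff_singleton, reaches_revE_iff]
  rfl

theorem IsStrongBridge.not_reaches_diff {E : Set (V × V)} {e : V × V} (h : IsStrongBridge E e) :
    ¬ Reaches (E \ {e}) e.1 e.2 := by
  intro he
  have reroute : ∀ {a b}, Reaches E a b → Reaches (E \ {e}) a b := fun hab =>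
    hab.diff_singleton_or.elim id fun h => h.1.trans (he.trans h.2)
  obtain ⟨-, a, b, ⟨hab, hba⟩, hn⟩ := h
  exact hn ⟨reroute hab, reroute hba⟩

theorem IsStrongBridge.isBridge_or_isBridge_revE {E : Set (V × V)} {a b : V}
    (h : IsStrongBridge E (a, b)) (s : V) :
    IsBridge E s (a, b) ∨ IsBridge (revE E) s (b, a) := by
  by_cases hsb : Reaches (E \ {(a, b)}) s b
  · exact .inr (isBridge_revE_iff (e := (a, b)).2
      ⟨h.1, fun has => h.not_reaches_diff (has.trans hsb)⟩)
  · exact .inl (isBridge_iff.2 ⟨h.1, hsb⟩)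

namespace Dom

variable {E F : Set (V × V)} {s a b c : V}

theorem refl : Dom E s a a := fun _ hp => hp.onWalk_end

theorem trans (hab : Dom E s a b) (hbc : Dom E s b c) : Dom E s a c := by
  intro p hp
  obtain ⟨q, r, rfl, hq, -⟩ := hp.exists_append_of_onWalk (hbc p hp)
  exact (hab q hq).mono (List.subset_append_left q r)

theorem antisymm (hs : Reaches E s a) (hab : Dom E s a b) (hba : Dom E s b a) : a = b := by
  by_contra hne
  obtain ⟨p, hp⟩ := hs
  induction hn : p.length using Nat.strong_induction_on generalizing p with
  | _ n ih =>
    obtain ⟨q, hq, hqp⟩ := hp.exists_shorter_of_onWalk (hba p hp) (Ne.symm hne)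
    obtain ⟨q', hq', hq'q⟩ := hq.exists_shorter_of_onWalk (hab q hq) hne
    exact ih _ (by omega) q' hq' rfl

theorem reaches_of_reaches (hab : Dom E s a b) (hFE : F ⊆ E) (h : Reaches F s b) :
    Reaches F a b :=
  let ⟨p, hp⟩ := h
  (hp.reaches_of_onWalk (hab p (hp.mono hFE))).2

theorem of_reaches_of_not_reaches (hFE : F ⊆ E) (hab : Dom E s a b) (hcb : Reaches F c b)
    (hca : ¬ Reaches F c a) : Dom E s a c := by
  intro p hp
  obtain ⟨q, hq⟩ := hcb
  rcases (hab _ (hp.append (hq.mono hFE))).of_append with h | h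
  · exact h
  · exact absurd (hq.reaches_of_onWalk h).1 hca

end Dom

def contractE (R : V → V → Prop) (E : Set (V × V)) : Set (V × V) :=
  {e | ∃ a b, (a, b) ∈ E ∧ R a e.1 ∧ R b e.2}

theorem auxE_eq_contractE (E : Set (V × V)) (s r : V) :
    AuxE E s r = contractE (ContractsTo E s r) E := rfl

theorem contractE_diff_singleton_subset {R : V → V → Prop} {E : Set (V × V)} {u v : V}
    (hu : ∀ x, R u x → x = u) (hv : ∀ x, R v x → x = v) :
    contractE R E \ {(u, v)} ⊆ contractE R (E \ {(u, v)}) := by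
  rintro ⟨x, y⟩ ⟨⟨a, b, hab, hax, hby⟩, hne⟩
  refine ⟨a, b, ⟨hab, ?_⟩, hax, hby⟩
  rintro ⟨rfl, rfl⟩
  exact hne (by rw [hu x hax, hv y hby]; rfl)

theorem Reaches.exists_of_contractE {R : V → V → Prop} {E : Set (V × V)} {S : Set V}
    (hE : ∀ a b, (a, b) ∈ E → a ∈ S → b ∈ S) (hR : ∀ c a x, c ∈ S → R c x → R a x → a ∈ S)
    {x y c : V} (h : Reaches (contractE R E) x y) (hc : c ∈ S) (hcx : R c x) :
    ∃ a ∈ S, R a y := by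
  obtain ⟨p, hp⟩ := h
  induction hp generalizing c with
  | nil => exact ⟨c, hc, hcx⟩
  | cons hxy _ ih =>
    obtain ⟨a, b, hab, hax, hby⟩ := hxy
    exact ih (hE a b hab (hR c a _ hc hcx hax)) hby

section Contraction

variable {E : Set (V × V)} {s r : V}

theorem Idom.not_dom {w x : V} (hs : Reaches E s w) (h : Idom E s w x) : ¬ Dom E s x w :=
  fun hxw => h.1.2 (Dom.antisymm hs h.1.1 hxw)

theorem InTree.eq_of_marked {m : V} (hs : Reaches E s m) (h : InTree E s r m)
    (hm : Marked E s m) : m = r :=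
  Dom.antisymm hs (h.2.2 m hm Dom.refl) h.2.1

theorem InTree.contractsTo_eq {w x : V} (hw : InTree E s r w) (h : ContractsTo E s r w x) :
    x = w := by
  rcases h with ⟨-, rfl⟩ | ⟨-, hn, -⟩ | ⟨hn, -⟩
  · rfl
  · exact absurd hw hn
  · exact absurd hw.2.1 hn

theorem ContractsTo.eq_root (hs : ∀ x, Reaches E s x) {c : V} (h : ContractsTo E s r c r) :
    c = r := by
  rcases h with ⟨-, h⟩ | ⟨-, -, -, -, w, hw, hid⟩ | ⟨-, hid⟩
  · exact h.symm
  · exact absurd hw.2.1 (hid.not_dom (hs w))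
  · exact absurd rfl hid.1.2

theorem ContractsTo.reaches_of_reaches {F : Set (V × V)} {u c a x : V} (hs : ∀ y, Reaches E s y)
    (hFE : F ⊆ E) (hsF : ∀ y, Reaches F s y) (hrs : Reaches F r s) (hu : InTree E s r u)
    (huc : Reaches F u c) (hcu : Reaches F c u) (hcs : ¬ Reaches F c s)
    (hc : ContractsTo E s r c x) (ha : ContractsTo E s r a x) : Reaches F u a := by
  have hcr : ¬ Reaches F c r := fun h => hcs (h.trans hrs)
  rcases hc with ⟨hcT, rfl⟩ | ⟨-, -, hxM, hxc, w, hwT, hwx⟩ | ⟨hrc, -⟩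
  · rcases ha with ⟨-, rfl⟩ | ⟨-, -, hcM, -⟩ | ⟨-, hcr'⟩
    · exact huc
    · exact absurd (hcT.eq_of_marked (hs _) hcM ▸ .refl F _) hcr
    · exact absurd hcT.2.1 (hcr'.not_dom (hs _))
  · have hrx : Dom E s r x := hwT.2.1.trans hwx.1.1
    have hxr : x ≠ r := by
      rintro rfl
      exact hwx.not_dom (hs w) hwT.2.1
    rcases ha with ⟨haT, rfl⟩ | ⟨-, -, -, hxa, -⟩ | ⟨-, hxr'⟩
    · exact absurd (haT.eq_of_marked (hs x) hxM) hxr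
    · have hux : Reaches F u x := by
        by_contra hux
        have hxu : Dom E s x u := hxc.of_reaches_of_not_reaches hFE huc hux
        exact hxr (Dom.antisymm (hs x) (hu.2.2 x hxM hxu) hrx)
      exact hux.trans (hxa.reaches_of_reaches hFE (hsF a))
    · exact absurd hrx (hxr'.not_dom (hs x))
  · exact absurd (hu.2.1.of_reaches_of_not_reaches hFE hcu hcr) hrc

end Contraction

theorem IsStrongBridge.isBridge_revE_auxE {E : Set (V × V)} {s u v r : V}
    (hSC : StronglyConnected E) (hsb : IsStrongBridge E (u, v)) (hnb : ¬ IsBridge E s (u, v))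
    (hu : InTree E s r u) (hv : InTree E s r v) :
    IsBridge (revE (AuxE E s r)) r (v, u) := by
  have huv : ¬ Reaches (E \ {(u, v)}) u v := hsb.not_reaches_diff
  have hsv : Reaches (E \ {(u, v)}) s v := by
    simpa [isBridge_iff, hsb.1] using hnb
  have hsD : ∀ y, Reaches (E \ {(u, v)}) s y := fun y =>
    (hSC s y).diff_singleton_or.elim id fun h => hsv.trans h.2
  have hcu : ∀ c, ¬ Reaches (E \ {(u, v)}) c s → Reaches (E \ {(u, v)}) c u := fun c hcs =>
    (hSC c s).diff_singleton_or.elim (absurd · hcs) And.left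
  have hrv : Reaches (E \ {(u, v)}) r v := hv.2.1.reaches_of_reaches Set.sdiff_subset hsv
  have hrs : Reaches (E \ {(u, v)}) r s := hrv.trans ((hSC v s).diff_singleton_or.elim id And.right)
  have hsat : ∀ c a x, Reaches (E \ {(u, v)}) u c → ContractsTo E s r c x →
      ContractsTo E s r a x → Reaches (E \ {(u, v)}) u a := by
    intro c a x huc hc ha
    by_cases hcs : Reaches (E \ {(u, v)}) c s
    · exact huc.trans (hcs.trans (hsD a))
    · exact ContractsTo.reaches_of_reaches (hSC s) Set.sdiff_subset hsD hrs hu huc (hcu c hcs)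
        hcs hc ha
  refine isBridge_revE_iff (e := (u, v)).2 ⟨⟨u, v, hsb.1, .inl ⟨hu, rfl⟩, .inl ⟨hv, rfl⟩⟩, ?_⟩
  intro hur
  rw [auxE_eq_contractE] at hur
  obtain ⟨c, huc, hcr⟩ := (hur.mono (contractE_diff_singleton_subset (fun _ => hu.contractsTo_eq)
    (fun _ => hv.contractsTo_eq))).exists_of_contractE (S := {c | Reaches (E \ {(u, v)}) u c})
    (fun _ _ hab hua => hua.trans (.single hab)) hsat (.refl _ u) (.inl ⟨hu, rfl⟩)
  exact huv ((ContractsTo.eq_root (hSC s) hcr ▸ huc).trans hrv)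

theorem stmt4 (E : Set (V × V)) (s u v : V)
    (hSC : StronglyConnected E)
    (hsb : IsStrongBridge E (u, v))
    (hnb : ¬ IsBridge E s (u, v)) :
    (∀ r : V, InTree E s r u → InTree E s r v →
      IsBridge (revE (AuxE E s r)) r (v, u)) ∧
    (∀ a b : V, IsStrongBridge E (a, b) →
      IsBridge E s (a, b) ∨ IsBridge (revE E) s (b, a)) :=
  ⟨fun _ hu hv => hsb.isBridge_revE_auxE hSC hnb hu hv,
    fun _ _ h => h.isBridge_or_isBridge_revE s⟩
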